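/- Let Q = 1 + x^a(x+1)^b(x^2+x+1)^c ∈ F_2[x] with a, b, c positive integers, a odd and b even, and suppose Q*(x) = x^{a+b+2c} Q(1/x) = 1 + x^d(x+1)^e for positive integers d, e. Then a = e = 1, b = c = 2^m, and d = 3·2^m for some positive integer m. -/
import Mathlib


open Polynomial

lemma two_zero : (2 : Polynomial (ZMod 2)) = 0 := by
  have : ((2:ℕ) : Polynomial (ZMod 2)) = 0 := by
    rw [Nat.cast_ofNat]; exact CharTwo.two_eq_zero
  simpa using this

lemma reflect_pow' (p : Polynomial (ZMod 2)) (k : ℕ) (hp : p.natDegree ≤ k) :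
    ∀ n, (p ^ n).reflect (k * n) = (p.reflect k) ^ n := by
  intro n
  induction n with
  | zero => simp [Polynomial.reflect_one]
  | succ n ih =>
      have h1 : (p ^ n).natDegree ≤ k * n :=
        le_trans (natDegree_pow_le) (by rw [Nat.mul_comm k n]; exact Nat.mul_le_mul_left n hp)
      rw [pow_succ, show k * (n+1) = k*n + k by ring, reflect_mul _ _ h1 hp, ih, pow_succ]

lemma X1_ne : (X + 1 : Polynomial (ZMod 2)) ≠ 0 := by
  intro h
  simpa using congrArg (fun p => Polynomial.coeff p 0) h

lemma X2_ne : (X ^ 2 + X + 1 : Polynomial (ZMod 2)) ≠ 0 := by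
  intro h
  simpa using congrArg (fun p => Polynomial.coeff p 0) h

lemma deg_lhs (b c : ℕ) :
    ((X + 1 : Polynomial (ZMod 2)) ^ b * (X ^ 2 + X + 1) ^ c).natDegree = b + 2 * c := by
  rw [natDegree_mul (pow_ne_zero _ X1_ne) (pow_ne_zero _ X2_ne), natDegree_pow, natDegree_pow]
  have h1 : (X + 1 : Polynomial (ZMod 2)).natDegree = 1 := by compute_degree!
  have h2 : (X ^ 2 + X + 1 : Polynomial (ZMod 2)).natDegree = 2 := by compute_degree!
  rw [h1, h2]; ring

lemma derivE (b c d : ℕ)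
    (E : (X + 1 : Polynomial (ZMod 2)) ^ b * (X ^ 2 + X + 1) ^ c = X ^ d + 1) :
    C (b : ZMod 2) * ((X + 1) ^ (b-1) * (X ^ 2 + X + 1) ^ c)
      + C (c : ZMod 2) * ((X + 1) ^ b * (X ^ 2 + X + 1) ^ (c-1))
      = C (d : ZMod 2) * X ^ (d - 1) := by
  have h := congrArg derivative E
  simp only [derivative_mul, derivative_pow, derivative_add, derivative_one, derivative_X,
    derivative_X_pow, add_zero] at h
  have h2 : C ((2:ℕ) : ZMod 2) = 0 := by
    have h22 : ((2:ℕ) : ZMod 2) = 0 := by decide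
    rw [h22, map_zero]
  rw [h2] at h
  linear_combination h

lemma cast_even {n : ℕ} (h : Even n) : ((n : ZMod 2)) = 0 := by
  rw [ZMod.natCast_eq_zero_iff]; exact h.two_dvd

lemma cast_odd {n : ℕ} (h : Odd n) : ((n : ZMod 2)) = 1 := by
  rw [← ZMod.natCast_mod, Nat.odd_iff.mp h, Nat.cast_one]

lemma key : ∀ d b c : ℕ, 0 < b → 0 < c →
    (X + 1 : Polynomial (ZMod 2)) ^ b * (X ^ 2 + X + 1) ^ c = X ^ d + 1 →
    ∃ k : ℕ, b = 2 ^ k ∧ c = 2 ^ k ∧ d = 3 * 2 ^ k := by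
  intro d
  induction d using Nat.strong_induction_on with
  | _ d IH =>
  intro b c hb hc E
  have hlne : (X + 1 : Polynomial (ZMod 2)) ^ b * (X ^ 2 + X + 1) ^ c ≠ 0 :=
    mul_ne_zero (pow_ne_zero _ X1_ne) (pow_ne_zero _ X2_ne)
  have hdpos : 0 < d := by
    by_contra h
    have h0 : d = 0 := by omega
    rw [h0, pow_zero] at E
    rw [E] at hlne
    exact hlne (by rw [show (1 + 1 : Polynomial (ZMod 2)) = 2 by norm_num, two_zero])
  have hdeg : d = b + 2 * c := by
    have := congrArg natDegree E
    rw [deg_lhs, show (1 : Polynomial (ZMod 2)) = C 1 by simp, natDegree_X_pow_add_C] at this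
    omega
  have hD := derivE b c d E
  rcases Nat.even_or_odd b with hbe | hbo
  · -- b even, hence d even, and c forced even
    have hde : Even d := by rcases hbe with ⟨t, ht⟩; exact ⟨t + c, by omega⟩
    rw [cast_even hbe, cast_even hde] at hD
    simp only [map_zero, zero_mul, zero_add] at hD
    have hce : Even c := by
      by_contra hco
      rw [cast_odd (Nat.odd_iff.mpr (Nat.not_even_iff.mp hco)), map_one, one_mul] at hD
      exact mul_ne_zero (pow_ne_zero _ X1_ne) (pow_ne_zero _ X2_ne) hD
    obtain ⟨b', hb'⟩ := hbe
    obtain ⟨c', hc'⟩ := hce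
    obtain ⟨d', hd'⟩ := hde
    have hb2 : b = 2 * b' := by omega
    have hc2 : c = 2 * c' := by omega
    have hd2 : d = 2 * d' := by omega
    rw [hb2, hc2, hd2] at E
    have E2 : ((X + 1 : Polynomial (ZMod 2)) ^ b' * (X ^ 2 + X + 1) ^ c') ^ 2
        = (X ^ d' + 1) ^ 2 := by
      rw [mul_pow, ← pow_mul, ← pow_mul, Nat.mul_comm b' 2, Nat.mul_comm c' 2, E]
      linear_combination (-(X ^ d') : Polynomial (ZMod 2)) * two_zero
    have hEq : (X + 1 : Polynomial (ZMod 2)) ^ b' * (X ^ 2 + X + 1) ^ c' = X ^ d' + 1 :=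
      frobenius_inj (Polynomial (ZMod 2)) 2 (by rw [frobenius_def, frobenius_def]; exact E2)
    obtain ⟨k, hk1, hk2, hk3⟩ := IH d' (by omega) b' c' (by omega) (by omega) hEq
    exact ⟨k + 1, by rw [pow_succ]; omega, by rw [pow_succ]; omega, by rw [pow_succ]; omega⟩
  · -- b odd
    have hdo : Odd d := by rcases hbo with ⟨t, ht⟩; exact ⟨t + c, by omega⟩
    rw [cast_odd hbo, cast_odd hdo] at hD
    simp only [map_one, one_mul] at hD
    rcases Nat.even_or_odd c with hce | hco
    · -- c even: contradiction via eval at 0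
      rw [cast_even hce] at hD
      simp only [map_zero, zero_mul, add_zero] at hD
      have h0 := congrArg (eval 0) hD
      simp only [eval_mul, eval_pow, eval_add, eval_X, eval_one] at h0
      rw [zero_pow (by omega : d - 1 ≠ 0)] at h0
      norm_num at h0
    · rw [cast_odd hco, map_one, one_mul] at hD
      have hX1C : (X + 1 : Polynomial (ZMod 2)) = X - C 1 := by
        rw [map_one]; linear_combination two_zero
      have hb1 : b = 1 := by
        by_contra hne
        have hdvd : (X + 1 : Polynomial (ZMod 2)) ∣ X ^ (d - 1) := by
          rw [← hD]
          exact dvd_add (dvd_mul_of_dvd_left (dvd_pow_self _ (by omega)) _)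
            (dvd_mul_of_dvd_left (dvd_pow_self _ (by omega)) _)
        rw [hX1C, dvd_iff_isRoot] at hdvd
        simp only [IsRoot, eval_pow, eval_X, one_pow] at hdvd
        exact one_ne_zero hdvd
      subst hb1
      have hc' : (X ^ 2 + X + 1 : Polynomial (ZMod 2)) ^ c
          = (X ^ 2 + X + 1) ^ (c - 1) * (X ^ 2 + X + 1) := by
        rw [← pow_succ]; congr 1; omega
      rw [hc'] at hD
      have hG : (X ^ 2 + X + 1 : Polynomial (ZMod 2)) ^ (c - 1) * X ^ 2 = X ^ (d - 1) := by
        linear_combination hD + (-((X + 1) * (X ^ 2 + X + 1) ^ (c - 1)) :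
          Polynomial (ZMod 2)) * two_zero
      have hc1 : c = 1 := by
        by_contra hne
        have hd1 : d - 1 = 2 + (d - 3) := by omega
        rw [hd1, pow_add] at hG
        have hcan : (X ^ 2 + X + 1 : Polynomial (ZMod 2)) ^ (c - 1) = X ^ (d - 3) := by
          have hX2 : (X : Polynomial (ZMod 2)) ^ 2 ≠ 0 := pow_ne_zero _ X_ne_zero
          exact mul_right_cancel₀ hX2 (hG.trans (mul_comm _ _))
        have h0 := congrArg (eval 0) hcan
        simp only [eval_pow, eval_add, eval_X, eval_one] at h0
        rw [zero_pow (by omega : d - 3 ≠ 0)] at h0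
        norm_num at h0
      exact ⟨0, by omega, by omega, by omega⟩

lemma reflX1 : (X + 1 : Polynomial (ZMod 2)).reflect 1 = X + 1 := by
  rw [reflect_add, reflect_one_X, Polynomial.reflect_one, pow_one, add_comm]

lemma reflX2 : (X ^ 2 + X + 1 : Polynomial (ZMod 2)).reflect 2 = X ^ 2 + X + 1 := by
  rw [reflect_add, reflect_add, Polynomial.reflect_one, reflect_monomial,
    show (X : Polynomial (ZMod 2)) = X ^ 1 by rw [pow_one], reflect_monomial,
    revAt_le (by norm_num : (2:ℕ) ≤ 2), revAt_le (by norm_num : (1:ℕ) ≤ 2)]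
  norm_num
  ring

lemma reflect_main (a b c : ℕ) :
    ((1 : Polynomial (ZMod 2)) + X ^ a * (X + 1) ^ b * (X ^ 2 + X + 1) ^ c).reflect
        (a + b + 2 * c)
      = X ^ (a + b + 2 * c) + (X + 1) ^ b * (X ^ 2 + X + 1) ^ c := by
  have hfg : (X ^ a * (X + 1) ^ b : Polynomial (ZMod 2)).natDegree ≤ a + b := by
    compute_degree
  have hg : ((X ^ 2 + X + 1 : Polynomial (ZMod 2)) ^ c).natDegree ≤ 2 * c := by
    compute_degree <;> omega
  have hx : ((X : Polynomial (ZMod 2)) ^ a).natDegree ≤ a := by compute_degree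
  have h1 : ((X + 1 : Polynomial (ZMod 2)) ^ b).natDegree ≤ b := by
    compute_degree <;> omega
  have hb' := reflect_pow' (X + 1) 1 (by compute_degree) b
  rw [one_mul] at hb'
  have hc' := reflect_pow' (X ^ 2 + X + 1) 2 (by compute_degree) c
  rw [reflect_add, Polynomial.reflect_one, reflect_mul _ _ hfg hg, reflect_mul _ _ hx h1,
    hb', hc', reflect_monomial, revAt_le (le_refl a),
    Nat.sub_self, pow_zero, one_mul, reflX1, reflX2]

lemma X1C : (X + 1 : Polynomial (ZMod 2)) = X - C 1 := by
  rw [map_one]; linear_combination two_zero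

theorem reciprocal_mersenne_odd_even (a b c d e : ℕ)
    (ha : 0 < a) (hb : 0 < b) (hc : 0 < c) (hd : 0 < d) (he : 0 < e)
    (hoa : Odd a) (heb : Even b)
    (Q : Polynomial (ZMod 2))
    (hQ : Q = 1 + X ^ a * (X + 1) ^ b * (X ^ 2 + X + 1) ^ c)
    (hstar : Q.reflect (a + b + 2 * c) = 1 + X ^ d * (X + 1) ^ e) :
    a = 1 ∧ e = 1 ∧ ∃ m : ℕ, 0 < m ∧ b = 2 ^ m ∧ c = 2 ^ m ∧ d = 3 * 2 ^ m := by
  have h2 : (2 : Polynomial (ZMod 2)) = 0 := two_zero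
  have H : (X : Polynomial (ZMod 2)) ^ (a + b + 2 * c) + (X + 1) ^ b * (X ^ 2 + X + 1) ^ c
      = 1 + X ^ d * (X + 1) ^ e := by
    rw [← reflect_main a b c, ← hQ, hstar]
  have hsum : (X + 1 : Polynomial (ZMod 2)) ^ b * (X ^ 2 + X + 1) ^ c + X ^ d * (X + 1) ^ e
      = X ^ (a + b + 2 * c) + 1 := by
    linear_combination H + (X ^ d * (X + 1) ^ e - X ^ (a + b + 2 * c)) * h2
  have hno : Odd (a + b + 2 * c) := by
    rcases hoa with ⟨t, ht⟩; rcases heb with ⟨s, hs⟩; exact ⟨t + s + c, by omega⟩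
  have hb2 : 2 ≤ b := by rcases heb with ⟨t, ht⟩; omega
  set S : Polynomial (ZMod 2) := ∑ i ∈ Finset.range (a + b + 2 * c), X ^ i with hS
  have hfac : S * (X + 1) = X ^ (a + b + 2 * c) + 1 := by
    linear_combination geom_sum_mul (X : Polynomial (ZMod 2)) (a + b + 2 * c) + (S - 1) * h2
  have he1 : e = 1 := by
    by_contra hne
    have hdvd : (X + 1 : Polynomial (ZMod 2)) * (X + 1) ∣ S * (X + 1) := by
      rw [hfac, ← hsum, ← pow_two]
      exact dvd_add (dvd_mul_of_dvd_left (pow_dvd_pow _ hb2) _)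
        (dvd_mul_of_dvd_right (pow_dvd_pow _ (by omega)) _)
    have hdvd2 : (X + 1 : Polynomial (ZMod 2)) ∣ S :=
      (mul_dvd_mul_iff_right X1_ne).mp hdvd
    rw [X1C, dvd_iff_isRoot] at hdvd2
    have : S.eval 1 = 1 := by
      rw [hS]
      simp only [eval_finset_sum, eval_pow, eval_X, one_pow, Finset.sum_const,
        Finset.card_range, nsmul_eq_mul, mul_one]
      exact cast_odd hno
    rw [hdvd2] at this
    exact zero_ne_one this
  subst he1
  rw [pow_one] at hsum
  have hTdeg : (X ^ d * (X + 1) : Polynomial (ZMod 2)).natDegree = d + 1 := by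
    rw [natDegree_mul (pow_ne_zero _ X_ne_zero) X1_ne, natDegree_X_pow]
    have h1 : (X + 1 : Polynomial (ZMod 2)).natDegree = 1 := by compute_degree!
    omega
  have hRdeg : ((X : Polynomial (ZMod 2)) ^ (a + b + 2 * c) + 1).natDegree = a + b + 2 * c := by
    rw [show (1 : Polynomial (ZMod 2)) = C 1 by simp, natDegree_X_pow_add_C]
  have hn1 : a + b + 2 * c = d + 1 := by
    by_contra hne
    have hds := congrArg natDegree hsum
    rw [hRdeg] at hds
    rcases Nat.lt_or_ge (d + 1) (a + b + 2 * c) with hlt | hge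
    · have hle := natDegree_add_le ((X + 1 : Polynomial (ZMod 2)) ^ b * (X ^ 2 + X + 1) ^ c)
        (X ^ d * (X + 1))
      rw [hds, deg_lhs, hTdeg] at hle
      omega
    · have h2' := natDegree_add_eq_right_of_natDegree_lt
        (p := (X + 1 : Polynomial (ZMod 2)) ^ b * (X ^ 2 + X + 1) ^ c) (q := X ^ d * (X + 1))
        (by rw [deg_lhs, hTdeg]; omega)
      rw [hds, hTdeg] at h2'
      omega
  have E : (X + 1 : Polynomial (ZMod 2)) ^ b * (X ^ 2 + X + 1) ^ c = X ^ d + 1 := by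
    rw [hn1] at hsum
    linear_combination hsum + (-(X ^ d) : Polynomial (ZMod 2)) * h2
  obtain ⟨k, hk1, hk2, hk3⟩ := key d b c hb hc E
  have hkpos : 0 < k := by
    by_contra hk0
    have : k = 0 := by omega
    rw [this, pow_zero] at hk1
    rcases heb with ⟨t, ht⟩; omega
  refine ⟨?_, rfl, k, hkpos, hk1, hk2, hk3⟩
  generalize hP : 2 ^ k = P at hk1 hk2 hk3
  omega
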